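/- arXiv:0706.3441 — 3 statements merged into one kernel-verified Lean document; each statement's English description precedes it below -/
import Mathlib

section
/- Let K/L be an extension of H-graded fields with extension degree n = [K:L] (the rank of K as a free L-module), residue degree f = [K₁:L₁] (the degree of the field extension of identity-graded components), and ramification index e = #(ρ(K^×)/ρ(L^×)), where ρ sends a homogeneous unit to its grading index. Then n = e·f (with the convention ∞·d = ∞·∞ = ∞). -/
open scoped DirectSum

/-- An `H`-graded field: a nonzero commutative ring with an internal grading by the
commutative group `H` in which every nonzero homogeneous element is invertible
(with homogeneous inverse). -/
structure GradedField (H : Type*) [CommGroup H] [DecidableEq H] (K : Type*) [CommRing K] where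
  comp : H → AddSubgroup K
  one_mem : (1 : K) ∈ comp 1
  mul_mem : ∀ {g h : H} {x y : K}, x ∈ comp g → y ∈ comp h → x * y ∈ comp (g * h)
  isInternal : DirectSum.IsInternal fun h : H => comp h
  zero_ne_one : (0 : K) ≠ 1
  inv_mem : ∀ {h : H} {x : K}, x ∈ comp h → x ≠ 0 → ∃ y ∈ comp h⁻¹, x * y = 1

namespace GradedField

variable {H : Type*} [CommGroup H] [DecidableEq H] {K : Type*} [CommRing K] (F : GradedField H K)

/-- A homogeneous element. -/
def Homogeneous (x : K) : Prop := ∃ h, x ∈ F.comp h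

/-- A subring is graded if each of its elements is a sum of homogeneous elements of the
subring. -/
def IsGradedSubring (R : Subring K) : Prop :=
  ∀ x ∈ R, x ∈ AddSubgroup.closure {y : K | y ∈ R ∧ F.Homogeneous y}

/-- A graded subfield: a graded subring closed under inverses of nonzero homogeneous
elements. -/
structure IsGradedSubfield (L : Subring K) : Prop where
  graded : F.IsGradedSubring L
  inv_mem : ∀ x ∈ L, F.Homogeneous x → x ≠ 0 → Ring.inverse x ∈ L

/-- A graded valuation ring of the graded subfield `L`: a graded subring `R ⊆ L` such that
every nonzero homogeneous element of `L` lies in `R` or has its inverse in `R`. -/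
def IsGradedValRing (L R : Subring K) : Prop :=
  R ≤ L ∧ F.IsGradedSubring R ∧
    ∀ x ∈ L, F.Homogeneous x → x ≠ 0 → (x ∈ R ∨ Ring.inverse x ∈ R)

/-- The identity component `K₁`, as a subring. -/
def oneComponent : Subring K where
  carrier := F.comp 1
  one_mem' := F.one_mem
  mul_mem' := fun ha hb => by simpa using F.mul_mem ha hb
  add_mem' := fun ha hb => (F.comp 1).add_mem ha hb
  zero_mem' := (F.comp 1).zero_mem
  neg_mem' := fun ha => (F.comp 1).neg_mem ha

theorem mem_oneComponent {x : K} : x ∈ F.oneComponent ↔ x ∈ F.comp 1 := Iff.rfl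

/-- The value group `ρ(L^×) ⊆ H` of a graded subfield `L`. -/
def valueGroup (L : Subring K)
    (hL : ∀ x ∈ L, F.Homogeneous x → x ≠ 0 → Ring.inverse x ∈ L) : Subgroup H where
  carrier := {h | ∃ x ∈ F.comp h, x ≠ 0 ∧ x ∈ L}
  one_mem' := ⟨1, F.one_mem, Ne.symm F.zero_ne_one, L.one_mem⟩
  mul_mem' := by
    rintro g h ⟨x, hx, hx0, hxL⟩ ⟨y, hy, hy0, hyL⟩
    obtain ⟨x', hx', hxx'⟩ := F.inv_mem hx hx0
    obtain ⟨y', hy', hyy'⟩ := F.inv_mem hy hy0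
    refine ⟨x * y, F.mul_mem hx hy, ?_, L.mul_mem hxL hyL⟩
    intro h0
    have h1 : x * y * (x' * y') = 1 := by rw [mul_mul_mul_comm, hxx', hyy', one_mul]
    rw [h0, zero_mul] at h1
    exact F.zero_ne_one h1
  inv_mem' := by
    rintro g ⟨x, hx, hx0, hxL⟩
    obtain ⟨y, hy, hxy⟩ := F.inv_mem hx hx0
    have hu : IsUnit x := IsUnit.of_mul_eq_one y hxy
    have hyx : Ring.inverse x = y := by
      calc Ring.inverse x = Ring.inverse x * (x * y) := by rw [hxy, mul_one]
        _ = Ring.inverse x * x * y := by ring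
        _ = y := by rw [Ring.inverse_mul_cancel x hu, one_mul]
    refine ⟨y, hy, ?_, ?_⟩
    · intro h0; rw [h0, mul_zero] at hxy; exact F.zero_ne_one hxy
    · rw [← hyx]; exact hL x hxL ⟨g, hx⟩ hx0

/-- The value group `ρ(K^×)` of the whole graded field. -/
def fullValueGroup : Subgroup H :=
  F.valueGroup ⊤ (fun _ _ _ _ => Subring.mem_top _)

/-- `K₁` as a module over `L₁ = K₁ ∩ L`. -/
def oneSubmodule (L : Subring K) : Submodule ↥(F.oneComponent ⊓ L) K where
  carrier := F.comp 1
  add_mem' := fun ha hb => (F.comp 1).add_mem ha hb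
  zero_mem' := (F.comp 1).zero_mem
  smul_mem' := fun c x hx => by
    have hc : (c : K) ∈ F.comp 1 := ((Subring.mem_inf).mp c.2).1
    have := F.mul_mem hc hx
    simpa [Subring.smul_def] using this

/-- A graded automorphism: a ring automorphism preserving each graded component. -/
def IsGradedAut (σ : RingAut K) : Prop := ∀ (h : H) (x : K), x ∈ F.comp h → σ x ∈ F.comp h

end GradedField

/-- The fixed subring `K^G` of a group of ring automorphisms. -/
def fixedSubring {K : Type*} [CommRing K] (G : Subgroup (RingAut K)) : Subring K where
  carrier := {x | ∀ σ ∈ G, σ x = x}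
  one_mem' := fun σ _ => map_one σ
  mul_mem' := fun ha hb σ hσ => by rw [map_mul, ha σ hσ, hb σ hσ]
  add_mem' := fun ha hb σ hσ => by rw [map_add, ha σ hσ, hb σ hσ]
  zero_mem' := fun σ _ => map_zero σ
  neg_mem' := fun ha σ hσ => by rw [map_neg, ha σ hσ]

theorem mem_fixedSubring {K : Type*} [CommRing K] {G : Subgroup (RingAut K)} {x : K} :
    x ∈ fixedSubring G ↔ ∀ σ ∈ G, σ x = x := Iff.rfl


namespace GradedField

variable {H : Type*} [CommGroup H] [DecidableEq H] {K : Type*} [CommRing K]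
variable (F : GradedField H K)

/-- Decomposition of an element into its homogeneous components. -/
noncomputable def decompose (x : K) : ⨁ h : H, ↥(F.comp h) :=
  (Equiv.ofBijective _ F.isInternal).symm x

/-- The degree-`h` homogeneous component of `x`. -/
noncomputable def component (h : H) (x : K) : K := (F.decompose x h : K)

/-- The inertia subgroup of `G`: graded automorphisms in `G` acting trivially on `K₁`. -/
def inertia (G : Subgroup (RingAut K)) : Subgroup (RingAut K) where
  carrier := {σ | σ ∈ G ∧ ∀ x ∈ F.comp 1, σ x = x}
  one_mem' := ⟨G.one_mem, fun _ _ => rfl⟩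
  mul_mem' := fun {a b} ha hb => ⟨G.mul_mem ha.1 hb.1, fun x hx => by
    show a (b x) = x
    rw [hb.2 x hx, ha.2 x hx]⟩
  inv_mem' := fun {a} ha => ⟨G.inv_mem ha.1, fun x hx => by
    conv_lhs => rw [← ha.2 x hx]
    exact a.symm_apply_apply x⟩

theorem mem_inertia {G : Subgroup (RingAut K)} {σ : RingAut K} :
    σ ∈ F.inertia G ↔ σ ∈ G ∧ ∀ x ∈ F.comp 1, σ x = x := Iff.rfl

end GradedField

/-- A subring `S` containing a subring `L`, viewed as an `L`-submodule of the ambient ring. -/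
def Subring.toSubmoduleOver {K : Type*} [CommRing K] (L S : Subring K) (hLS : L ≤ S) :
    Submodule ↥L K where
  carrier := S
  add_mem' := fun ha hb => S.add_mem ha hb
  zero_mem' := S.zero_mem
  smul_mem' := fun c x hx => S.mul_mem (hLS c.2) hx

section ZR

variable {H : Type*} [CommGroup H] [DecidableEq H] {K : Type*} [CommRing K]

/-- The Zariski–Riemann space of graded valuation rings of `K` containing `k₀`. -/
def GradedField.ZR (F : GradedField H K) (k₀ : Subring K) : Type _ :=
  {O : Subring K // F.IsGradedValRing ⊤ O ∧ k₀ ≤ O}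

/-- The set of homogeneous units (nonzero homogeneous elements) of `K`. -/
def GradedField.HomogUnits (F : GradedField H K) : Type _ :=
  {x : K // x ≠ 0 ∧ F.Homogeneous x}

open Classical in
/-- The embedding of the Zariski–Riemann space into `{0,1}^{K^×}` via characteristic
functions. -/
noncomputable def GradedField.chi (F : GradedField H K) (k₀ : Subring K) (O : F.ZR k₀) :
    F.HomogUnits → Bool :=
  fun x => decide (x.1 ∈ O.1)

/-- Basic open sets `P{F}∖{G}` of the constructible topology, for finite sets `F`, `G` of
homogeneous units. -/
def GradedField.constructibleBasis (F : GradedField H K) (k₀ : Subring K) :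
    Set (Set (F.ZR k₀)) :=
  {s | ∃ Fs Gs : Finset K, (∀ a ∈ Fs, a ≠ 0 ∧ F.Homogeneous a) ∧
    (∀ b ∈ Gs, b ≠ 0 ∧ F.Homogeneous b) ∧
    s = {O : F.ZR k₀ | (∀ a ∈ Fs, a ∈ O.1) ∧ ∀ b ∈ Gs, b ∉ O.1}}

/-- The constructible topology on the Zariski–Riemann space. -/
def GradedField.constructibleTop (F : GradedField H K) (k₀ : Subring K) :
    TopologicalSpace (F.ZR k₀) :=
  TopologicalSpace.generateFrom (F.constructibleBasis k₀)


universe u v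

/-!
Put `Γ = ρ(L^×)` and `K_Γ = ⊕_{d ∈ Γ} K_d`, a subring with `L ⊆ K_Γ ⊆ K`.
Homogeneous units `u_q` whose degrees represent the cosets `q ∈ ρ(K^×)/Γ` form a `K_Γ`-basis
of `K`: the degree-`d` component of `∑ y_q u_q` only sees the one `q` containing `d`.
An `L₁`-basis of `K₁` is an `L`-basis of `K_Γ`: a homogeneous unit of `L` of degree `d⁻¹` moves
the degree-`d` part of `K_Γ` into `K₁`, and back.
The tower law `[K : L] = [K_Γ : L] [K : K_Γ]` then reads `n = f e`.
-/

theorem Subgroup.inv_out_mul_out_mem_iff {G : Type*} [Group G] {A Γ : Subgroup G}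
    (q q' : A ⧸ Γ.subgroupOf A) : ((q.out : G)⁻¹ * q'.out ∈ Γ ↔ q = q') := by
  conv_rhs => rw [← QuotientGroup.out_eq' q, ← QuotientGroup.out_eq' q']
  rw [QuotientGroup.eq, Subgroup.mem_subgroupOf]
  rfl

theorem Subgroup.inv_mul_out_mk_mem {G : Type*} [Group G] {A Γ : Subgroup G} (g : A) :
    (g : G)⁻¹ * (QuotientGroup.mk g : A ⧸ Γ.subgroupOf A).out ∈ Γ :=
  Subgroup.mem_subgroupOf.mp (QuotientGroup.eq.mp (QuotientGroup.out_eq' _).symm)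

theorem Subring.coe_smul_of_isScalarTower {R : Type*} [CommRing R] {L S : Subring R}
    [Algebra L S] [IsScalarTower L S R] (l : L) (s : S) : ((l • s : S) : R) = l * s := by
  simpa only [Subring.smul_def, smul_eq_mul, mul_one] using smul_assoc l s (1 : R)

namespace GradedField

variable {H : Type*} [CommGroup H] [DecidableEq H] {K : Type*} [CommRing K] (F : GradedField H K)

noncomputable instance : DirectSum.Decomposition F.comp := F.isInternal.chooseDecomposition

noncomputable def proj (d : H) : K →+ K :=
  (F.comp d).subtype.comp
    ((DFinsupp.evalAddMonoidHom d).comp (DirectSum.decomposeAddEquiv F.comp).toAddMonoidHom)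

theorem proj_mem (d : H) (x : K) : F.proj d x ∈ F.comp d := (DirectSum.decompose F.comp x d).2

theorem proj_of_mem {d : H} {x : K} (hx : x ∈ F.comp d) : F.proj d x = x :=
  DirectSum.decompose_of_mem_same F.comp hx

theorem proj_of_mem_of_ne {d e : H} {x : K} (hx : x ∈ F.comp d) (hde : d ≠ e) :
    F.proj e x = 0 :=
  DirectSum.decompose_of_mem_ne F.comp hx hde

open Classical in
theorem sum_proj (x : K) : ∑ d ∈ (DirectSum.decompose F.comp x).support, F.proj d x = x :=
  DirectSum.sum_support_decompose F.comp x

theorem eq_zero_of_forall_proj_eq_zero {x : K} (h : ∀ d, F.proj d x = 0) : x = 0 := by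
  classical
  rw [← F.sum_proj x]
  exact Finset.sum_eq_zero fun d _ => h d

theorem eq_top_of_forall_mem_comp {R : Type*} [Semiring R] [Module R K] {P : Submodule R K}
    (h : ∀ d, ∀ x ∈ F.comp d, x ∈ P) : P = ⊤ :=
  eq_top_iff.2 fun x _ => DirectSum.Decomposition.inductionOn F.comp P.zero_mem
    (fun m => h _ m.1 m.2) (fun _ _ => P.add_mem) x

theorem proj_mul_of_mem {h : H} {w : K} (hw : w ∈ F.comp h) (d : H) (a : K) :
    F.proj d (a * w) = F.proj (d * h⁻¹) a * w := by
  induction a using DirectSum.Decomposition.inductionOn F.comp with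
  | zero => simp
  | @homogeneous g a =>
    have haw : (a : K) * w ∈ F.comp (g * h) := F.mul_mem a.2 hw
    by_cases hg : g = d * h⁻¹
    · subst hg
      rw [inv_mul_cancel_right] at haw
      rw [F.proj_of_mem haw, F.proj_of_mem a.2]
    · rw [F.proj_of_mem_of_ne a.2 hg, zero_mul, F.proj_of_mem_of_ne haw]
      rintro rfl
      exact hg (mul_inv_cancel_right g h).symm
  | add a a' ha ha' => rw [add_mul, map_add, map_add, ha, ha', add_mul]

theorem mem_oneSubmodule {L : Subring K} {x : K} : x ∈ F.oneSubmodule L ↔ x ∈ F.comp 1 :=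
  Iff.rfl

theorem isUnit_of_mem {h : H} {x : K} (hx : x ∈ F.comp h) (hx0 : x ≠ 0) : IsUnit x :=
  let ⟨_, _, hxy⟩ := F.inv_mem hx hx0
  .of_mul_eq_one _ hxy

theorem proj_mem_of_mem {R : Subring K} (hR : F.IsGradedSubring R) {x : K} (hx : x ∈ R)
    (d : H) : F.proj d x ∈ R := by
  have hcl := hR x hx
  clear hx
  induction hcl using AddSubgroup.closure_induction with
  | mem y hy =>
    obtain ⟨hyR, e, hye⟩ := hy
    by_cases hed : e = d
    · subst hed; rwa [F.proj_of_mem hye]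
    · rw [F.proj_of_mem_of_ne hye hed]; exact R.zero_mem
  | zero => simp
  | add y z _ _ hy hz => simpa using R.add_mem hy hz
  | neg y _ hy => simpa using R.neg_mem hy

variable {F} {L : Subring K} {hinv : ∀ x ∈ L, F.Homogeneous x → x ≠ 0 → Ring.inverse x ∈ L}

theorem mem_valueGroup_of_proj_ne_zero (hgr : F.IsGradedSubring L) {x : K} (hx : x ∈ L) {d : H}
    (hd : F.proj d x ≠ 0) : d ∈ F.valueGroup L hinv :=
  ⟨F.proj d x, F.proj_mem d x, hd, F.proj_mem_of_mem hgr hx d⟩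

theorem exists_inv_mem_of_mem (hinv : ∀ x ∈ L, F.Homogeneous x → x ≠ 0 → Ring.inverse x ∈ L)
    {d : H} {x : K} (hx : x ∈ F.comp d) (hxL : x ∈ L) (hx0 : x ≠ 0) :
    ∃ y ∈ F.comp d⁻¹, y ∈ L ∧ x * y = 1 := by
  obtain ⟨y, hy, hxy⟩ := F.inv_mem hx hx0
  have hinv_eq : Ring.inverse x = y := by
    simpa using (Ring.inverse_mul_eq_iff_eq_mul x 1 y (F.isUnit_of_mem hx hx0)).2 hxy.symm
  exact ⟨y, hy, hinv_eq ▸ hinv x hxL ⟨d, hx⟩ hx0, hxy⟩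

theorem exists_mul_eq_one_of_mem_valueGroup {d : H} (hd : d ∈ F.valueGroup L hinv) :
    ∃ x ∈ F.comp d, x ∈ L ∧ ∃ y ∈ F.comp d⁻¹, y ∈ L ∧ x * y = 1 := by
  obtain ⟨x, hx, hx0, hxL⟩ := hd
  exact ⟨x, hx, hxL, exists_inv_mem_of_mem hinv hx hxL hx0⟩

variable (F) in
theorem isField_oneComponent_inf (hL : F.IsGradedSubfield L) :
    IsField ↥(F.oneComponent ⊓ L) := by
  refine ⟨⟨0, 1, fun h => F.zero_ne_one (congrArg Subtype.val h)⟩, mul_comm, ?_⟩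
  rintro ⟨x, hx⟩ hx0
  obtain ⟨hx1, hxL⟩ := Subring.mem_inf.mp hx
  obtain ⟨y, hy, hyL, hxy⟩ :=
    exists_inv_mem_of_mem hL.inv_mem hx1 hxL fun h => hx0 (Subtype.ext h)
  rw [inv_one] at hy
  exact ⟨⟨y, Subring.mem_inf.mpr ⟨hy, hyL⟩⟩, Subtype.ext hxy⟩

theorem exists_ne_zero_of_mem_fullValueGroup {d : H} (hd : d ∈ F.fullValueGroup) :
    ∃ x ∈ F.comp d, x ≠ 0 :=
  let ⟨x, hx, hx0, _⟩ := hd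
  ⟨x, hx, hx0⟩

section DegreeSubring

variable (F) (Γ : Subgroup H)

def degreeSubring : Subring K where
  carrier := {x | ∀ d ∉ Γ, F.proj d x = 0}
  zero_mem' := fun d _ => map_zero (F.proj d)
  add_mem' := fun hx hy d hd => by rw [map_add, hx d hd, hy d hd, add_zero]
  neg_mem' := fun hx d hd => by rw [map_neg, hx d hd, neg_zero]
  one_mem' := fun d hd => F.proj_of_mem_of_ne F.one_mem fun h => hd (h ▸ Γ.one_mem)
  mul_mem' := by
    classical
    intro x y hx hy D hD
    rw [← F.sum_proj y, Finset.mul_sum, map_sum]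
    refine Finset.sum_eq_zero fun d _ => ?_
    rw [F.proj_mul_of_mem (F.proj_mem d y)]
    by_cases hd : d ∈ Γ
    · rw [hx _ fun h => hD (by simpa using Γ.mul_mem h hd), zero_mul]
    · rw [hy d hd, mul_zero]

variable {F Γ}

theorem mem_degreeSubring_of_mem {d : H} (hd : d ∈ Γ) {x : K} (hx : x ∈ F.comp d) :
    x ∈ F.degreeSubring Γ :=
  fun _ he => F.proj_of_mem_of_ne hx fun h => he (h ▸ hd)

theorem proj_mem_degreeSubring {x : K} (hx : x ∈ F.degreeSubring Γ) (d : H) :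
    F.proj d x ∈ F.degreeSubring Γ := by
  by_cases hd : d ∈ Γ
  · exact mem_degreeSubring_of_mem hd (F.proj_mem d x)
  · rw [hx d hd]; exact zero_mem _

variable (F Γ) in
def ofOneSubmodule (v : F.oneSubmodule L) : F.degreeSubring Γ :=
  ⟨v, mem_degreeSubring_of_mem Γ.one_mem v.2⟩

theorem le_degreeSubring_valueGroup (hgr : F.IsGradedSubring L) :
    L ≤ F.degreeSubring (F.valueGroup L hinv) :=
  fun _ hx _ hd => by_contra fun h => hd (mem_valueGroup_of_proj_ne_zero hgr hx h)

end DegreeSubring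

section CosetBasis

variable {Γ : Subgroup H} {u : F.fullValueGroup ⧸ Γ.subgroupOf F.fullValueGroup → K}

theorem linearIndependent_of_mem_comp_out (hu : ∀ q, u q ∈ F.comp q.out) (hu0 : ∀ q, u q ≠ 0) :
    LinearIndependent (F.degreeSubring Γ) u := by
  rw [linearIndependent_iff']
  intro s y hy q₀ hq₀
  refine Subtype.ext (F.eq_zero_of_forall_proj_eq_zero fun e => ?_)
  by_cases he : e ∈ Γ
  swap
  · exact (y q₀).2 e he
  have hcomp := congrArg (F.proj (e * q₀.out)) hy
  rw [map_sum, map_zero, Finset.sum_eq_single q₀ ?_ (absurd hq₀), Subring.smul_def, smul_eq_mul,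
    F.proj_mul_of_mem (hu q₀), mul_inv_cancel_right] at hcomp
  · exact (F.isUnit_of_mem (hu q₀) (hu0 q₀)).mul_left_eq_zero.mp hcomp
  intro q _ hq
  rw [Subring.smul_def, smul_eq_mul, F.proj_mul_of_mem (hu q), (y q).2, zero_mul]
  intro hmem
  refine hq ((Subgroup.inv_out_mul_out_mem_iff q q₀).mp ?_)
  convert Γ.mul_mem (Γ.inv_mem he) hmem using 1
  rw [mul_assoc, inv_mul_cancel_left, mul_comm]

theorem span_eq_top_of_mem_comp_out (hu : ∀ q, u q ∈ F.comp q.out) (hu0 : ∀ q, u q ≠ 0) :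
    Submodule.span (F.degreeSubring Γ) (Set.range u) = ⊤ := by
  refine F.eq_top_of_forall_mem_comp fun d z hz => ?_
  rcases eq_or_ne z 0 with rfl | hz0
  · exact zero_mem _
  have hd : d ∈ F.fullValueGroup := ⟨z, hz, hz0, Subring.mem_top z⟩
  set q : F.fullValueGroup ⧸ Γ.subgroupOf F.fullValueGroup := QuotientGroup.mk ⟨d, hd⟩
  obtain ⟨v, hv, huv⟩ := F.inv_mem (hu q) (hu0 q)
  have hzv : z * v ∈ F.degreeSubring Γ := by
    refine mem_degreeSubring_of_mem ?_ (F.mul_mem hz hv)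
    simpa [mul_comm] using Γ.inv_mem (Subgroup.inv_mul_out_mk_mem ⟨d, hd⟩)
  have hz_eq : (⟨z * v, hzv⟩ : F.degreeSubring Γ) • u q = z := by
    rw [Subring.smul_def, smul_eq_mul, mul_assoc, mul_comm v, huv, mul_one]
  exact hz_eq ▸ Submodule.smul_mem _ _ (Submodule.subset_span ⟨q, rfl⟩)

variable (F Γ) in
noncomputable def cosetBasis :
    Module.Basis (F.fullValueGroup ⧸ Γ.subgroupOf F.fullValueGroup) (F.degreeSubring Γ) K :=
  have hu q := F.exists_ne_zero_of_mem_fullValueGroup q.out.2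
  .mk (linearIndependent_of_mem_comp_out (fun q => (hu q).choose_spec.1)
      fun q => (hu q).choose_spec.2)
    (span_eq_top_of_mem_comp_out (fun q => (hu q).choose_spec.1) fun q => (hu q).choose_spec.2).ge

end CosetBasis

section Unramified

variable (hL : F.IsGradedSubfield L) [Algebra L (F.degreeSubring (F.valueGroup L hL.inv_mem))]
  [IsScalarTower L (F.degreeSubring (F.valueGroup L hL.inv_mem)) K]
  {J : Type*} (b : Module.Basis J ↥(F.oneComponent ⊓ L) ↥(F.oneSubmodule L))

theorem linearIndependent_ofOneSubmodule_basis :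
    LinearIndependent L (F.ofOneSubmodule (F.valueGroup L hL.inv_mem) ∘ b) := by
  rw [linearIndependent_iff']
  intro s c hc j₀ hj₀
  have hK : ∑ j ∈ s, (c j : K) * b j = 0 := by
    simpa [Subring.coe_smul_of_isScalarTower, ofOneSubmodule] using congrArg Subtype.val hc
  refine Subtype.ext (F.eq_zero_of_forall_proj_eq_zero fun e => ?_)
  by_cases he : e ∈ F.valueGroup L hL.inv_mem
  swap
  · by_contra h
    exact he (mem_valueGroup_of_proj_ne_zero hL.graded (c j₀).2 h)
  obtain ⟨l, hl, hlL, l', -, -, hll'⟩ := exists_mul_eq_one_of_mem_valueGroup (Subgroup.inv_mem _ he)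
  have hmem : ∀ j, l * F.proj e (c j) ∈ F.oneComponent ⊓ L := fun j =>
    ⟨by simpa [mem_oneComponent] using F.mul_mem hl (F.proj_mem e (c j)),
      L.mul_mem hlL (F.proj_mem_of_mem hL.graded (c j).2 e)⟩
  have hrel : ∑ j ∈ s, (⟨_, hmem j⟩ : ↥(F.oneComponent ⊓ L)) • b j = 0 := by
    apply Subtype.ext
    calc _ = l * F.proj e (∑ j ∈ s, (c j : K) * b j) := by
          simp only [Submodule.coe_sum, Submodule.coe_smul, Subring.smul_def, smul_eq_mul,
            map_sum, Finset.mul_sum]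
          refine Finset.sum_congr rfl fun j _ => ?_
          rw [F.proj_mul_of_mem (b j).2, inv_one, mul_one, mul_assoc]
      _ = 0 := by rw [hK, map_zero, mul_zero]
  have h0 := congrArg Subtype.val (linearIndependent_iff'.mp b.linearIndependent s _ hrel j₀ hj₀)
  exact (IsUnit.of_mul_eq_one _ hll').mul_right_eq_zero.mp h0

theorem ofOneSubmodule_mem_span (v : F.oneSubmodule L) :
    F.ofOneSubmodule _ v ∈
      Submodule.span L (Set.range (F.ofOneSubmodule (F.valueGroup L hL.inv_mem) ∘ b)) := by
  classical
  have hv : F.ofOneSubmodule (F.valueGroup L hL.inv_mem) v = ∑ j ∈ (b.repr v).support,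
      (⟨b.repr v j, (Subring.mem_inf.mp (b.repr v j).2).2⟩ : L) • F.ofOneSubmodule _ (b j) := by
    apply Subtype.ext
    conv_lhs => rw [ofOneSubmodule, ← b.linearCombination_repr v]
    simp [Finsupp.linearCombination_apply, Finsupp.sum, Subring.smul_def,
      Subring.coe_smul_of_isScalarTower, ofOneSubmodule]
  rw [hv]
  exact Submodule.sum_mem _ fun j _ => Submodule.smul_mem _ _ (Submodule.subset_span ⟨j, rfl⟩)

theorem span_ofOneSubmodule_basis :
    Submodule.span L (Set.range (F.ofOneSubmodule (F.valueGroup L hL.inv_mem) ∘ b)) = ⊤ := by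
  classical
  set P := Submodule.span L (Set.range (F.ofOneSubmodule (F.valueGroup L hL.inv_mem) ∘ b))
  have hhom : ∀ d, ∀ z ∈ F.comp d, ∀ hzS : z ∈ F.degreeSubring (F.valueGroup L hL.inv_mem),
      ⟨z, hzS⟩ ∈ P := by
    intro d z hz hzS
    rcases eq_or_ne z 0 with rfl | hz0
    · exact P.zero_mem
    have hd : d ∈ F.valueGroup L hL.inv_mem :=
      by_contra fun hd => hz0 (by rw [← F.proj_of_mem hz]; exact hzS d hd)
    obtain ⟨l, hl, hlL, l', -, hl'L, hll'⟩ :=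
      exists_mul_eq_one_of_mem_valueGroup (Subgroup.inv_mem _ hd)
    have hlz : l * z ∈ F.oneSubmodule L := by simpa [mem_oneSubmodule] using F.mul_mem hl hz
    have hz_eq : (⟨z, hzS⟩ : F.degreeSubring (F.valueGroup L hL.inv_mem)) =
        (⟨l', hl'L⟩ : L) • F.ofOneSubmodule _ ⟨l * z, hlz⟩ := by
      refine Subtype.ext ?_
      rw [Subring.coe_smul_of_isScalarTower, ofOneSubmodule, ← mul_assoc, mul_comm l', hll',
        one_mul]
    rw [hz_eq]
    exact P.smul_mem _ (ofOneSubmodule_mem_span hL b _)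
  refine eq_top_iff.2 fun x _ => ?_
  have hx : x = ∑ d ∈ (DirectSum.decompose F.comp x).support,
      ⟨F.proj d x, proj_mem_degreeSubring x.2 d⟩ :=
    Subtype.ext (by simp [F.sum_proj])
  rw [hx]
  exact P.sum_mem fun d _ => hhom d _ (F.proj_mem d x) _

noncomputable def degreeSubringBasis :
    Module.Basis J L (F.degreeSubring (F.valueGroup L hL.inv_mem)) :=
  .mk (linearIndependent_ofOneSubmodule_basis hL b) (span_ofOneSubmodule_basis hL b).ge

end Unramified

end GradedField

/-- For an extension `K/L` of `H`-graded fields, the degree `n = [K:L]` equals `e·f`, where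
`f = [K₁:L₁]` and `e = #(ρ(K^×)/ρ(L^×))`, as cardinals (so the conventions for `∞` hold). -/
theorem GradedField.rank_eq_ramification_mul_residue {H : Type u} [CommGroup H] [DecidableEq H]
    {K : Type v} [CommRing K] (F : GradedField H K) (L : Subring K)
    (hL : F.IsGradedSubfield L) :
    Cardinal.lift.{u} (Module.rank ↥L K) =
      Cardinal.lift.{v}
          (Cardinal.mk
            (↥F.fullValueGroup ⧸ (F.valueGroup L hL.inv_mem).subgroupOf F.fullValueGroup)) *
        Cardinal.lift.{u} (Module.rank ↥(F.oneComponent ⊓ L) ↥(F.oneSubmodule L)) := by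
  have : Nontrivial K := ⟨⟨0, 1, F.zero_ne_one⟩⟩
  let : Field ↥(F.oneComponent ⊓ L) := (F.isField_oneComponent_inf hL).toField
  set S := F.degreeSubring (F.valueGroup L hL.inv_mem)
  let : Algebra L S := (Subring.inclusion (le_degreeSubring_valueGroup hL.graded)).toAlgebra
  have : IsScalarTower L S K := .of_algebraMap_eq fun _ => rfl
  let b₁ := Module.Basis.ofVectorSpace ↥(F.oneComponent ⊓ L) ↥(F.oneSubmodule L)
  let bS := degreeSubringBasis hL b₁
  let bK := F.cosetBasis (F.valueGroup L hL.inv_mem)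
  have := Module.Free.of_basis bS
  have := Module.Free.of_basis bK
  rw [← rank_mul_rank L S K, Cardinal.lift_mul, ← bK.mk_eq_rank, mul_comm, ← bS.mk_eq_rank'',
    b₁.mk_eq_rank'']
end ZR
end

section
/- Let K be an H-graded field and G a finite group of graded automorphisms of K. The inertia subgroup I ⊆ G (the subgroup of elements acting trivially on the field K₁) is abelian: for σ ∈ I and each r in the image of the grading map ρ on homogeneous units, σ acts on the one-dimensional K₁-vector space K_r by multiplication by a root of unity ξ_{σ,r} ∈ K₁^×, and the resulting map σ ↦ (ξ_{σ,·}) is an injective homomorphism from I into an abelian group. -/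
open scoped DirectSum

section ZR

variable {H : Type*} [CommGroup H] [DecidableEq H] {K : Type*} [CommRing K]

/-!
An inertia element `σ` fixes `K₁`, and `K_r = K₁ · x` for any nonzero `x ∈ K_r`, so `σ` acts
on `K_r` as multiplication by `ξ = σ(x) x⁻¹ ∈ K₁`, a scalar which `σ` itself fixes. Hence
`σⁿ x = ξⁿ x`, so `σⁿ = 1` forces `ξⁿ = 1`, and two such scalings commute. As `K` is the direct
sum of the `K_r`, an automorphism is determined by its action on them.
-/

namespace RingAut

variable {R : Type*}

theorem pow_apply_eq_pow_mul [Semiring R] {σ : RingAut R} {ξ x : R} (hξ : σ ξ = ξ)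
    (hx : σ x = ξ * x) (n : ℕ) : (σ ^ n) x = ξ ^ n * x := by
  induction n with
  | zero => simp
  | succ n ih => rw [pow_succ', mul_apply, ih, map_mul, map_pow, hξ, hx, pow_succ, mul_assoc]

theorem pow_eq_one_of_apply_eq_mul [Semiring R] {σ : RingAut R} {ξ x : R} (hξ : σ ξ = ξ)
    (hx : σ x = ξ * x) (hux : IsUnit x) {n : ℕ} (hσn : σ ^ n = 1) : ξ ^ n = 1 :=
  hux.mul_right_cancel <| by rw [← pow_apply_eq_pow_mul hξ hx, hσn, one_mul, one_apply]

theorem apply_apply_comm_of_apply_eq_mul [CommSemiring R] {σ τ : RingAut R} {ξ η x : R}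
    (hση : σ η = η) (hτξ : τ ξ = ξ) (hσx : σ x = ξ * x) (hτx : τ x = η * x) :
    σ (τ x) = τ (σ x) := by
  rw [hτx, hσx, map_mul, map_mul, hση, hτξ, hσx, hτx, mul_left_comm]

end RingAut

namespace GradedField

variable {H : Type*} [CommGroup H] [DecidableEq H] {K : Type*} [CommRing K] (F : GradedField H K)

theorem ringAut_ext {σ τ : RingAut K} (h : ∀ r, ∀ x ∈ F.comp r, σ x = τ x) : σ = τ := by
  ext x
  obtain ⟨y, rfl⟩ := F.isInternal.surjective x
  induction y using DirectSum.induction_on with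
  | zero => simp
  | of r x => simpa using h r x x.2
  | add y z hy hz => rw [map_add, map_add, map_add, hy, hz]

theorem mem_fullValueGroup_of_mem_comp {r : H} {x : K} (hx : x ∈ F.comp r) (hx0 : x ≠ 0) :
    r ∈ F.fullValueGroup :=
  ⟨x, hx, hx0, Subring.mem_top x⟩

theorem exists_apply_eq_mul_of_fixes_oneComponent {σ : RingAut K} (hσ : F.IsGradedAut σ)
    (hσ1 : ∀ x ∈ F.comp 1, σ x = x) (r : H) :
    ∃ ξ ∈ F.comp 1, ∀ x ∈ F.comp r, σ x = ξ * x := by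
  obtain hr | ⟨x, hx, hx0⟩ := (F.comp r).bot_or_exists_ne_zero
  · refine ⟨0, (F.comp 1).zero_mem, fun z hz => ?_⟩
    rw [(AddSubgroup.mem_bot.1 (hr ▸ hz) : z = 0), map_zero, mul_zero]
  · obtain ⟨y, hy, hxy⟩ := F.inv_mem hx hx0
    refine ⟨σ x * y, by simpa using F.mul_mem (hσ r x hx) hy, fun z hz => ?_⟩
    have hzy : z * y ∈ F.comp 1 := by simpa using F.mul_mem hz hy
    calc σ z = σ (z * y * x) := by rw [mul_assoc, mul_comm y, hxy, mul_one]
      _ = σ x * y * z := by rw [map_mul, hσ1 _ hzy]; ring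

end GradedField

/-- The inertia subgroup `I ⊆ G` of elements acting trivially on `K₁` is abelian: each
`σ ∈ I` acts on the one-dimensional `K₁`-vector space `K_r` (for `r ∈ ρ(K^×)`) by
multiplication by a root of unity `ξ_{σ,r} ∈ K₁^×`, any two elements of `I` commute, and an
element of `I` is determined by the family `(ξ_{σ,·})` of its scaling factors (so
`σ ↦ ξ_{σ,·}` is an injective homomorphism into an abelian group). -/
theorem GradedField.inertia_abelian {H : Type*} [CommGroup H] [DecidableEq H] {K : Type*}
    [CommRing K] (F : GradedField H K) (G : Subgroup (RingAut K)) [Finite G]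
    (hG : ∀ σ ∈ G, F.IsGradedAut σ) :
    (∀ σ ∈ F.inertia G, ∀ r ∈ F.fullValueGroup,
      ∃ ξ ∈ F.oneComponent, ξ ≠ 0 ∧ (∃ n : ℕ, 0 < n ∧ ξ ^ n = 1) ∧
        ∀ x ∈ F.comp r, σ x = ξ * x) ∧
    (∀ σ ∈ F.inertia G, ∀ τ ∈ F.inertia G, σ * τ = τ * σ) ∧
    (∀ σ ∈ F.inertia G, ∀ τ ∈ F.inertia G,
      (∀ r ∈ F.fullValueGroup, ∀ x ∈ F.comp r, σ x = τ x) → σ = τ) := by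
  have scalar : ∀ σ ∈ F.inertia G, ∀ r, ∃ ξ ∈ F.comp 1, ∀ x ∈ F.comp r, σ x = ξ * x :=
    fun σ hσ => F.exists_apply_eq_mul_of_fixes_oneComponent (hG σ hσ.1) hσ.2
  refine ⟨fun σ hσ r hr => ?_, fun σ hσ τ hτ => ?_, fun σ _ τ _ hστ => ?_⟩
  · obtain ⟨ξ, hξ1, hξ⟩ := scalar σ hσ r
    obtain ⟨x, hx, hx0, -⟩ := hr
    obtain ⟨y, -, hxy⟩ := F.inv_mem hx hx0
    obtain ⟨n, hn, hσn⟩ := isOfFinOrder_iff_pow_eq_one.1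
      (Submonoid.isOfFinOrder_coe.2 (isOfFinOrder_of_finite (⟨σ, hσ.1⟩ : G)))
    have hξn : ξ ^ n = 1 :=
      RingAut.pow_eq_one_of_apply_eq_mul (hσ.2 ξ hξ1) (hξ x hx) (.of_mul_eq_one y hxy) hσn
    refine ⟨ξ, hξ1, ?_, ⟨n, hn, hξn⟩, hξ⟩
    rintro rfl
    exact F.zero_ne_one (by rwa [zero_pow hn.ne'] at hξn)
  · refine F.ringAut_ext fun r x hx => ?_
    obtain ⟨ξ, hξ1, hξ⟩ := scalar σ hσ r
    obtain ⟨η, hη1, hη⟩ := scalar τ hτ r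
    exact RingAut.apply_apply_comm_of_apply_eq_mul (hσ.2 η hη1) (hτ.2 ξ hξ1) (hξ x hx) (hη x hx)
  · refine F.ringAut_ext fun r x hx => ?_
    rcases eq_or_ne x 0 with rfl | hx0
    · simp
    · exact hστ r (F.mem_fullValueGroup_of_mem_comp hx hx0) x hx
end ZR
end

section
/- Let k'/k be a field extension of finite degree d and V' a valuation ring of k'. Then for every x ∈ k'^× one has x^{d!} ∈ k^× · V'^×; that is, the d!-th power of any nonzero element of k' is the product of a nonzero element of k and a unit of V'. -/
/-!
Since `1, x, …, x ^ d` are linearly dependent over `k`, some nontrivial relation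
`∑ cᵢ xⁱ = 0` holds. By the ultrametric inequality the largest value of the valuation of `V'`
on its nonzero terms is attained twice, say at `i < j`, so `(c_j / c_i) x ^ (j - i)` is a unit
of `V'`. As `0 < j - i ≤ d`, the exponent `j - i` divides `d!`.
-/

open Module

theorem Valuation.exists_ne_map_eq_of_sum_eq_zero {R Γ₀ ι : Type*} [Ring R]
    [LinearOrderedCommMonoidWithZero Γ₀] (v : Valuation R Γ₀) {s : Finset ι} {f : ι → R}
    (hsum : ∑ i ∈ s, f i = 0) {i₀ : ι} (hi₀ : i₀ ∈ s) (hv₀ : v (f i₀) ≠ 0) :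
    ∃ i ∈ s, ∃ j ∈ s, i ≠ j ∧ v (f i) = v (f j) ∧ v (f i) ≠ 0 := by
  classical
  obtain ⟨i, hi, hmax⟩ := s.exists_max_image (fun i => v (f i)) ⟨i₀, hi₀⟩
  have hvi : v (f i) ≠ 0 := ((zero_lt_iff.2 hv₀).trans_le (hmax i₀ hi₀)).ne'
  by_contra! hnone
  have hlt : ∀ j ∈ s.erase i, v (f j) < v (f i) := fun j hj =>
    (hmax j (Finset.mem_of_mem_erase hj)).lt_of_ne fun heq =>
      hvi (hnone i hi j (Finset.mem_of_mem_erase hj) (Finset.ne_of_mem_erase hj).symm heq.symm)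
  have hrest : ∑ j ∈ s.erase i, f j = -f i := by
    rw [Finset.sum_erase_eq_sub hi, hsum, zero_sub]
  have := v.map_sum_lt hvi hlt
  rw [hrest, Valuation.map_neg] at this
  exact this.false

theorem Valuation.exists_map_algebraMap_mul_pow_eq_one {k K Γ₀ : Type*} [Field k] [Field K]
    [Algebra k K] [FiniteDimensional k K] [LinearOrderedCommGroupWithZero Γ₀]
    (v : Valuation K Γ₀) {x : K} (hx : x ≠ 0) :
    ∃ e, 0 < e ∧ e ≤ finrank k K ∧ ∃ c : k, c ≠ 0 ∧ v (algebraMap k K c * x ^ e) = 1 := by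
  have hdep : ¬ LinearIndependent k (fun i : Fin (finrank k K + 1) => x ^ (i : ℕ)) :=
    fun h => by simpa using h.fintype_card_le_finrank
  obtain ⟨g, hsum, i₀, hg₀⟩ := Fintype.not_linearIndependent_iff.mp hdep
  have hv₀ : v (g i₀ • x ^ (i₀ : ℕ)) ≠ 0 := by simp [Algebra.smul_def, *]
  obtain ⟨i, -, j, -, hij, hvij, hvi⟩ :=
    v.exists_ne_map_eq_of_sum_eq_zero hsum (Finset.mem_univ i₀) hv₀
  wlog hlt : (i : ℕ) < j generalizing i j
  · exact this j i hij.symm hvij.symm (hvij ▸ hvi)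
      ((Fin.val_injective.ne hij).lt_or_gt.resolve_left hlt)
  have hgi : g i ≠ 0 := by rintro h; simp [h] at hvi
  have hgj : g j ≠ 0 := by rintro h; rw [h, zero_smul, map_zero] at hvij; exact hvi hvij
  refine ⟨j - i, by omega, by omega, g j / g i, div_ne_zero hgj hgi, ?_⟩
  have hquot : algebraMap k K (g j / g i) * x ^ ((j : ℕ) - i) =
      g j • x ^ (j : ℕ) / (g i • x ^ (i : ℕ)) := by
    rw [Algebra.smul_def, Algebra.smul_def, ← Nat.sub_add_cancel hlt.le, pow_add, map_div₀]
    field_simp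
    simp
  rw [hquot, map_div₀, ← hvij, div_self hvi]

/-- If `k'/k` is a finite field extension of degree `d` and `V'` is a valuation ring of `k'`,
then for every nonzero `x ∈ k'`, the power `x ^ d!` is a product of a nonzero element of `k`
and a unit of `V'`. -/
theorem pow_factorial_mem_base_mul_unit {k k' : Type*} [Field k] [Field k'] [Algebra k k']
    [FiniteDimensional k k'] (V' : ValuationSubring k') (x : k') (hx : x ≠ 0) :
    ∃ (c : k) (u : k'), c ≠ 0 ∧ u ∈ V' ∧ (∃ v ∈ V', u * v = 1) ∧
      x ^ Nat.factorial (Module.finrank k k') = algebraMap k k' c * u := by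
  obtain ⟨e, he, hed, c, hc, hv⟩ := V'.valuation.exists_map_algebraMap_mul_pow_eq_one (k := k) hx
  obtain ⟨m, hm⟩ := Nat.dvd_factorial he hed
  set u := algebraMap k k' c * x ^ e
  have hum : V'.valuation (u ^ m) = 1 := by rw [map_pow, hv, one_pow]
  have hu₀ : u ^ m ≠ 0 := by rintro h; simp [h] at hum
  refine ⟨c⁻¹ ^ m, u ^ m, pow_ne_zero _ (inv_ne_zero hc),
    (V'.valuation_le_one_iff _).mp hum.le,
    ⟨(u ^ m)⁻¹, (V'.valuation_le_one_iff _).mp (by rw [map_inv₀, hum, inv_one]),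
      mul_inv_cancel₀ hu₀⟩, ?_⟩
  rw [hm, pow_mul, map_pow, ← mul_pow, map_inv₀, inv_mul_cancel_left₀ (by simpa using hc)]
end
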